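/- arXiv:2305.08951 — 2 statements merged into one kernel-verified Lean document; each statement's English description precedes it below -/
import Mathlib

section
/- Let G_d ∈ ℝ^{n×n} and let d(s) = exp(s·G_d), s ∈ ℝ, be the associated linear continuous group in ℝⁿ. Let P ∈ ℝ^{n×n} be symmetric, and let ‖x‖_P = √(xᵀPx). Then d is a dilation that is strictly monotone with respect to ‖·‖_P (i.e., there exists β > 0 such that ‖d(s)x‖_P ≤ e^{βs}‖x‖_P for all s ≤ 0 and all x ∈ ℝⁿ) if and only if P ≻ 0 and P·G_d + G_dᵀ·P ≻ 0. -/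
/-!
Write `q_x(s) = ‖d(s) x‖_P²`. Its derivative is `yᵀ (P G_d + G_dᵀ P) y` with `y = d(s) x`, so
`P G_d + G_dᵀ P ⪰ 2β P` as quadratic forms exactly when every `s ↦ e^{-2βs} q_x(s)` is
nondecreasing; for `P ⪰ 0` this is the monotonicity estimate with rate `β`, and for `P ≻ 0` it
also gives `e^{βs} ‖x‖_P ≤ ‖d(s) x‖_P` for `s ≥ 0`, hence the dilation property. For `P, Q ≻ 0`
compactness of the unit sphere yields `c > 0` with `Q ⪰ c P`.

For `P ≻ 0` itself: monotonicity makes `{s | q_x(s) > 0}` an up-set for every `x`. The dilation property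
says it is nonempty for `x ≠ 0`, and compactness of the sphere bounds its infimum uniformly on the
cone `{x | xᵀ P x ≤ 0}`, which is invariant under `d(s)` for `s ≤ 0`; a nonzero point of the cone
flowed far enough backwards violates the bound, so `P ≻ 0`.
-/

open Matrix Filter Topology Set

/-- The linear continuous group `d(s) = exp (s • G)` generated by `G`. -/
noncomputable def dilMat {n : ℕ} (G : Matrix (Fin n) (Fin n) ℝ) (s : ℝ) :
    Matrix (Fin n) (Fin n) ℝ := NormedSpace.exp (s • G)

/-- The weighted "norm" `‖x‖_P = √(xᵀ P x)` associated with a symmetric matrix `P`. -/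
noncomputable def normP {n : ℕ} (P : Matrix (Fin n) (Fin n) ℝ) (x : Fin n → ℝ) : ℝ :=
  Real.sqrt (x ⬝ᵥ (P *ᵥ x))

section UnitSphere

variable {E : Type*} [NormedAddCommGroup E] [NormedSpace ℝ E]

theorem inv_norm_smul_mem_unitSphere {y : E} (hy : y ≠ 0) : ‖y‖⁻¹ • y ∈ Metric.sphere (0 : E) 1 :=
  mem_sphere_zero_iff_norm.2 (norm_smul_inv_norm hy)

theorem exists_mem_unitSphere_eq_smul {y : E} (hy : y ≠ 0) :
    ∃ r : ℝ, ∃ u ∈ Metric.sphere (0 : E) 1, y = r • u :=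
  ⟨‖y‖, _, inv_norm_smul_mem_unitSphere hy,
    by rw [smul_smul, mul_inv_cancel₀ (norm_ne_zero_iff.2 hy), one_smul]⟩

end UnitSphere

section QuadraticForm

variable {ι : Type*} [Fintype ι]

theorem smul_dotProduct_mulVec_smul (M : Matrix ι ι ℝ) (c : ℝ) (y : ι → ℝ) :
    (c • y) ⬝ᵥ (M *ᵥ (c • y)) = c ^ 2 * (y ⬝ᵥ (M *ᵥ y)) := by
  rw [mulVec_smul, smul_dotProduct, dotProduct_smul, smul_eq_mul, smul_eq_mul, ← mul_assoc, sq]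

theorem HasDerivAt.dotProduct {f g : ℝ → ι → ℝ} {f' g' : ι → ℝ} {s : ℝ}
    (hf : HasDerivAt f f' s) (hg : HasDerivAt g g' s) :
    HasDerivAt (fun u => f u ⬝ᵥ g u) (f' ⬝ᵥ g s + f s ⬝ᵥ g') s := by
  simp only [_root_.dotProduct, ← Finset.sum_add_distrib]
  exact HasDerivAt.fun_sum fun i _ => (hasDerivAt_pi.1 hf i).mul (hasDerivAt_pi.1 hg i)

theorem HasDerivAt.matrix_mulVec {f : ℝ → ι → ℝ} {f' : ι → ℝ} {s : ℝ}
    (M : Matrix ι ι ℝ) (hf : HasDerivAt f f' s) : HasDerivAt (fun u => M *ᵥ f u) (M *ᵥ f') s :=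
  (mulVecLin M).toContinuousLinearMap.hasFDerivAt.comp_hasDerivAt s hf

/-- On the unit sphere `Q` is bounded below by a positive constant and `P` from above. -/
theorem exists_pos_mul_dotProduct_mulVec_le (P : Matrix ι ι ℝ) {Q : Matrix ι ι ℝ}
    (hQ : ∀ y, y ≠ 0 → 0 < y ⬝ᵥ (Q *ᵥ y)) :
    ∃ c, 0 < c ∧ ∀ y, c * (y ⬝ᵥ (P *ᵥ y)) ≤ y ⬝ᵥ (Q *ᵥ y) := by
  rcases (Metric.sphere (0 : ι → ℝ) 1).eq_empty_or_nonempty with hS | hS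
  · refine ⟨1, one_pos, fun y => ?_⟩
    obtain rfl : y = 0 := by
      by_contra hy
      simpa [hS] using inv_norm_smul_mem_unitSphere hy
    simp
  obtain ⟨a, ha, haQ⟩ := (isCompact_sphere (0 : ι → ℝ) 1).exists_isMinOn hS
    (by fun_prop : Continuous fun y : ι → ℝ => y ⬝ᵥ (Q *ᵥ y)).continuousOn
  obtain ⟨b, -, hbP⟩ := (isCompact_sphere (0 : ι → ℝ) 1).exists_isMaxOn hS
    (by fun_prop : Continuous fun y : ι → ℝ => y ⬝ᵥ (P *ᵥ y)).continuousOn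
  have hm : 0 < a ⬝ᵥ (Q *ᵥ a) := hQ a (ne_zero_of_mem_unit_sphere ⟨a, ha⟩)
  set c := a ⬝ᵥ (Q *ᵥ a) / (|b ⬝ᵥ (P *ᵥ b)| + 1)
  have hc : 0 < c := by positivity
  have hunit : ∀ u ∈ Metric.sphere (0 : ι → ℝ) 1,
      c * (u ⬝ᵥ (P *ᵥ u)) ≤ u ⬝ᵥ (Q *ᵥ u) := by
    intro u hu
    have hPu : u ⬝ᵥ (P *ᵥ u) ≤ |b ⬝ᵥ (P *ᵥ b)| + 1 :=
      (hbP hu).trans (by linarith [le_abs_self (b ⬝ᵥ (P *ᵥ b))])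
    calc c * (u ⬝ᵥ (P *ᵥ u)) ≤ c * (|b ⬝ᵥ (P *ᵥ b)| + 1) := mul_le_mul_of_nonneg_left hPu hc.le
      _ = a ⬝ᵥ (Q *ᵥ a) := div_mul_cancel₀ _ (by positivity)
      _ ≤ u ⬝ᵥ (Q *ᵥ u) := haQ hu
  refine ⟨c, hc, fun y => ?_⟩
  rcases eq_or_ne y 0 with rfl | hy
  · simp
  obtain ⟨r, u, hu, rfl⟩ := exists_mem_unitSphere_eq_smul hy
  rw [smul_dotProduct_mulVec_smul, smul_dotProduct_mulVec_smul, mul_left_comm]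
  exact mul_le_mul_of_nonneg_left (hunit u hu) (sq_nonneg _)

end QuadraticForm

section Dilation

variable {n : ℕ} (G P : Matrix (Fin n) (Fin n) ℝ)

theorem dilMat_zero : dilMat G 0 = 1 := by
  simp [dilMat, NormedSpace.exp_zero]

theorem dilMat_add (s t : ℝ) : dilMat G (s + t) = dilMat G s * dilMat G t := by
  rw [dilMat, add_smul]
  exact Matrix.exp_add_of_commute _ _ ((Commute.refl G).smul_left s |>.smul_right t)

theorem dilMat_mulVec_dilMat_mulVec (s t : ℝ) (x : Fin n → ℝ) :
    dilMat G s *ᵥ (dilMat G t *ᵥ x) = dilMat G (s + t) *ᵥ x := by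
  rw [dilMat_add, mulVec_mulVec]

theorem dilMat_mulVec_ne_zero (s : ℝ) {x : Fin n → ℝ} (hx : x ≠ 0) :
    dilMat G s *ᵥ x ≠ 0 := by
  intro h
  have h' := congrArg (dilMat G (-s) *ᵥ ·) h
  simp only [dilMat_mulVec_dilMat_mulVec, neg_add_cancel, dilMat_zero, one_mulVec,
    mulVec_zero] at h'
  exact hx h'

theorem hasDerivAt_dilMat_mulVec (x : Fin n → ℝ) (s : ℝ) :
    HasDerivAt (fun u => dilMat G u *ᵥ x) (G *ᵥ (dilMat G s *ᵥ x)) s := by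
  -- matrices carry no global norm; any one serves to differentiate `exp`
  let := Matrix.linftyOpNormedRing (n := Fin n) (α := ℝ)
  let := Matrix.linftyOpNormedAlgebra (n := Fin n) (R := ℝ) (α := ℝ)
  rw [mulVec_mulVec]
  exact ((mulVecBilin ℝ ℝ).flip x).toContinuousLinearMap.hasFDerivAt.comp_hasDerivAt s
    (hasDerivAt_exp_smul_const' G s)

noncomputable def dilQuad (x : Fin n → ℝ) (s : ℝ) : ℝ :=
  (dilMat G s *ᵥ x) ⬝ᵥ (P *ᵥ (dilMat G s *ᵥ x))

theorem normP_dilMat_mulVec (x : Fin n → ℝ) (s : ℝ) :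
    normP P (dilMat G s *ᵥ x) = √(dilQuad G P x s) := rfl

theorem dilQuad_zero (x : Fin n → ℝ) : dilQuad G P x 0 = x ⬝ᵥ (P *ᵥ x) := by
  simp [dilQuad, dilMat_zero]

theorem dilQuad_dilMat_mulVec (x : Fin n → ℝ) (s t : ℝ) :
    dilQuad G P (dilMat G t *ᵥ x) s = dilQuad G P x (s + t) := by
  rw [dilQuad, dilQuad, dilMat_mulVec_dilMat_mulVec]

theorem dilQuad_smul (c : ℝ) (x : Fin n → ℝ) (s : ℝ) :
    dilQuad G P (c • x) s = c ^ 2 * dilQuad G P x s := by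
  rw [dilQuad, mulVec_smul, smul_dotProduct_mulVec_smul, dilQuad]

theorem continuous_dilQuad (s : ℝ) : Continuous fun x => dilQuad G P x s := by
  unfold dilQuad
  fun_prop

theorem hasDerivAt_dilQuad (x : Fin n → ℝ) (s : ℝ) :
    HasDerivAt (dilQuad G P x)
      ((dilMat G s *ᵥ x) ⬝ᵥ ((P * G + Gᵀ * P) *ᵥ (dilMat G s *ᵥ x))) s := by
  have hy := hasDerivAt_dilMat_mulVec G x s
  refine (hy.dotProduct (hy.matrix_mulVec P)).congr_deriv ?_
  set y := dilMat G s *ᵥ x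
  rw [add_mulVec, dotProduct_add, ← mulVec_mulVec, ← mulVec_mulVec, add_comm,
    dotProduct_mulVec y Gᵀ, vecMul_transpose]

theorem hasDerivAt_exp_mul_dilQuad (c : ℝ) (x : Fin n → ℝ) (s : ℝ) :
    HasDerivAt (fun u => Real.exp (-(c * u)) * dilQuad G P x u)
      (Real.exp (-(c * s)) * ((dilMat G s *ᵥ x) ⬝ᵥ ((P * G + Gᵀ * P) *ᵥ (dilMat G s *ᵥ x)) -
        c * dilQuad G P x s)) s := by
  have hexp : HasDerivAt (fun u => Real.exp (-(c * u))) (Real.exp (-(c * s)) * -c) s := by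
    simpa using ((hasDerivAt_id s).const_mul c).neg.exp
  exact (hexp.mul (hasDerivAt_dilQuad G P x s)).congr_deriv (by ring)

theorem monotone_exp_mul_dilQuad_iff (c : ℝ) :
    (∀ x, Monotone fun u => Real.exp (-(c * u)) * dilQuad G P x u) ↔
      ∀ y, c * (y ⬝ᵥ (P *ᵥ y)) ≤ y ⬝ᵥ ((P * G + Gᵀ * P) *ᵥ y) := by
  constructor
  · intro hmono y
    have h := (hasDerivAt_exp_mul_dilQuad G P c y 0).nonneg_of_monotone (hmono y)
    simpa [dilMat_zero, dilQuad_zero] using h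
  · intro hQ x
    have hd := hasDerivAt_exp_mul_dilQuad G P c x
    refine monotone_of_deriv_nonneg (fun u => (hd u).differentiableAt) fun u => ?_
    rw [(hd u).deriv]
    exact mul_nonneg (Real.exp_nonneg _) (sub_nonneg.2 (hQ _))

end Dilation

section Monotonicity

variable {n : ℕ} {G P : Matrix (Fin n) (Fin n) ℝ} {β : ℝ}

theorem dilQuad_nonpos_of_le
    (hmono : ∀ s : ℝ, s ≤ 0 → ∀ x : Fin n → ℝ,
      normP P (dilMat G s *ᵥ x) ≤ Real.exp (β * s) * normP P x)
    {x : Fin n → ℝ} {s t : ℝ} (hst : s ≤ t) (ht : dilQuad G P x t ≤ 0) :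
    dilQuad G P x s ≤ 0 := by
  have h := hmono (s - t) (by linarith) (dilMat G t *ᵥ x)
  rw [normP_dilMat_mulVec, normP_dilMat_mulVec, dilQuad_dilMat_mulVec, sub_add_cancel,
    Real.sqrt_eq_zero'.2 ht, mul_zero] at h
  exact Real.sqrt_eq_zero'.1 (le_antisymm h (Real.sqrt_nonneg _))

theorem monotone_exp_mul_dilQuad_of_normP_le (hP : ∀ y, 0 ≤ y ⬝ᵥ (P *ᵥ y))
    (hmono : ∀ s : ℝ, s ≤ 0 → ∀ x : Fin n → ℝ,
      normP P (dilMat G s *ᵥ x) ≤ Real.exp (β * s) * normP P x) (x : Fin n → ℝ) :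
    Monotone fun u => Real.exp (-(2 * β * u)) * dilQuad G P x u := by
  intro s t hst
  have ht : 0 ≤ dilQuad G P x t := hP _
  have h := hmono (s - t) (by linarith) (dilMat G t *ᵥ x)
  rw [normP_dilMat_mulVec, normP_dilMat_mulVec, dilQuad_dilMat_mulVec, sub_add_cancel,
    Real.sqrt_le_iff, mul_pow, Real.sq_sqrt ht] at h
  calc Real.exp (-(2 * β * s)) * dilQuad G P x s
      ≤ Real.exp (-(2 * β * s)) * (Real.exp (β * (s - t)) ^ 2 * dilQuad G P x t) :=
        mul_le_mul_of_nonneg_left h.2 (Real.exp_nonneg _)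
    _ = Real.exp (-(2 * β * t)) * dilQuad G P x t := by
        rw [sq, ← mul_assoc, ← mul_assoc, ← Real.exp_add, ← Real.exp_add]
        ring_nf

theorem normP_dilMat_mulVec_le_of_monotone {x : Fin n → ℝ}
    (hf : Monotone fun u => Real.exp (-(2 * β * u)) * dilQuad G P x u) {s t : ℝ}
    (hst : s ≤ t) :
    normP P (dilMat G s *ᵥ x) ≤ Real.exp (β * (s - t)) * normP P (dilMat G t *ᵥ x) := by
  have h : dilQuad G P x s ≤ Real.exp (β * (s - t)) ^ 2 * dilQuad G P x t := by
    calc dilQuad G P x s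
        = Real.exp (2 * β * s) * (Real.exp (-(2 * β * s)) * dilQuad G P x s) := by
          rw [← mul_assoc, ← Real.exp_add, add_neg_cancel, Real.exp_zero, one_mul]
      _ ≤ Real.exp (2 * β * s) * (Real.exp (-(2 * β * t)) * dilQuad G P x t) :=
          mul_le_mul_of_nonneg_left (hf hst) (Real.exp_nonneg _)
      _ = Real.exp (β * (s - t)) ^ 2 * dilQuad G P x t := by
          rw [← mul_assoc, ← Real.exp_add, sq, ← Real.exp_add]
          ring_nf
  rw [normP_dilMat_mulVec, normP_dilMat_mulVec]
  calc √(dilQuad G P x s) ≤ √(Real.exp (β * (s - t)) ^ 2 * dilQuad G P x t) :=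
        Real.sqrt_le_sqrt h
    _ = Real.exp (β * (s - t)) * √(dilQuad G P x t) := by
        rw [Real.sqrt_mul (sq_nonneg _), Real.sqrt_sq (Real.exp_nonneg _)]

theorem tendsto_normP_dilMat_mulVec_atBot (hβ : 0 < β) {x : Fin n → ℝ}
    (hf : Monotone fun u => Real.exp (-(2 * β * u)) * dilQuad G P x u) :
    Tendsto (fun s => normP P (dilMat G s *ᵥ x)) atBot (𝓝 0) := by
  have hlim :
      Tendsto (fun s => Real.exp (β * (s - 0)) * normP P (dilMat G 0 *ᵥ x)) atBot (𝓝 0) := by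
    simpa using (Real.tendsto_exp_atBot.comp (tendsto_id.const_mul_atBot hβ)).mul_const
      (normP P (dilMat G 0 *ᵥ x))
  refine tendsto_of_tendsto_of_tendsto_of_le_of_le' tendsto_const_nhds hlim
    (Eventually.of_forall fun s => Real.sqrt_nonneg _) ?_
  filter_upwards [eventually_le_atBot 0] with s hs using normP_dilMat_mulVec_le_of_monotone hf hs

theorem tendsto_normP_dilMat_mulVec_atTop (hβ : 0 < β) {x : Fin n → ℝ}
    (hf : Monotone fun u => Real.exp (-(2 * β * u)) * dilQuad G P x u)
    (hx : 0 < x ⬝ᵥ (P *ᵥ x)) :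
    Tendsto (fun s => normP P (dilMat G s *ᵥ x)) atTop atTop := by
  have hlim : Tendsto (fun s => Real.exp (β * s) * normP P x) atTop atTop :=
    (Real.tendsto_exp_atTop.comp (tendsto_id.const_mul_atTop hβ)).atTop_mul_const
      (Real.sqrt_pos.2 hx)
  refine tendsto_atTop_mono' atTop ?_ hlim
  filter_upwards [eventually_ge_atTop 0] with s hs
  have h := normP_dilMat_mulVec_le_of_monotone hf hs
  rw [dilMat_zero, one_mulVec, zero_sub] at h
  calc Real.exp (β * s) * normP P x
      ≤ Real.exp (β * s) * (Real.exp (β * -s) * normP P (dilMat G s *ᵥ x)) :=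
        mul_le_mul_of_nonneg_left h (Real.exp_nonneg _)
    _ = normP P (dilMat G s *ᵥ x) := by
        rw [← mul_assoc, ← Real.exp_add, mul_neg, add_neg_cancel, Real.exp_zero, one_mul]

theorem dotProduct_mulVec_pos_of_dilQuad
    (hgrow : ∀ x : Fin n → ℝ, x ≠ 0 → ∃ s, 0 < dilQuad G P x s)
    (hdown : ∀ x s t, s ≤ t → dilQuad G P x t ≤ 0 → dilQuad G P x s ≤ 0)
    {v : Fin n → ℝ} (hv : v ≠ 0) : 0 < v ⬝ᵥ (P *ᵥ v) := by
  have hup : ∀ {x s t}, s ≤ t → 0 < dilQuad G P x s → 0 < dilQuad G P x t := fun hst hs =>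
    lt_of_not_ge fun ht => (hdown _ _ _ hst ht).not_gt hs
  have hK : IsCompact (Metric.sphere (0 : Fin n → ℝ) 1 ∩ {x | dilQuad G P x 0 ≤ 0}) :=
    (isCompact_sphere 0 1).inter_right (isClosed_le (continuous_dilQuad G P 0) continuous_const)
  obtain ⟨T, hT⟩ := hK.elim_directed_cover (fun T => {x | 0 < dilQuad G P x T})
    (fun T => isOpen_lt continuous_const (continuous_dilQuad G P T))
    (fun x hx => mem_iUnion.2 (hgrow x (ne_zero_of_mem_unit_sphere ⟨x, hx.1⟩)))
    (fun T T' => ⟨max T T', fun _ => hup (le_max_left T T'), fun _ => hup (le_max_right T T')⟩)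
  by_contra! hv0
  obtain ⟨T', hTT', hT'⟩ : ∃ T', T ≤ T' ∧ 0 ≤ T' :=
    ⟨max T 0, le_max_left T 0, le_max_right T 0⟩
  have hwT : dilQuad G P (dilMat G (-T') *ᵥ v) T' ≤ 0 := by
    rwa [dilQuad_dilMat_mulVec, add_neg_cancel, dilQuad_zero]
  have hw0 := hdown _ _ _ hT' hwT
  have hu := inv_norm_smul_mem_unitSphere (dilMat_mulVec_ne_zero G (-T') hv)
  have huT := hup hTT' (hT ⟨hu, (dilQuad_smul G P _ _ _).trans_le
    (mul_nonpos_of_nonneg_of_nonpos (sq_nonneg _) hw0)⟩)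
  rw [dilQuad_smul] at huT
  exact (mul_nonpos_of_nonneg_of_nonpos (sq_nonneg _) hwT).not_gt huT

end Monotonicity

/-- `d(s) = exp (s G_d)` is a dilation, strictly monotone with respect to
`‖·‖_P`, if and only if `P ≻ 0` and `P G_d + G_dᵀ P ≻ 0`. -/
theorem stmt0 {n : ℕ} (Gd P : Matrix (Fin n) (Fin n) ℝ) (hP : P.IsSymm) :
    ((∀ x : Fin n → ℝ, x ≠ 0 →
        Tendsto (fun s : ℝ => normP P (dilMat Gd s *ᵥ x)) atTop atTop ∧
        Tendsto (fun s : ℝ => normP P (dilMat Gd s *ᵥ x)) atBot (𝓝 0)) ∧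
      (∃ β : ℝ, 0 < β ∧ ∀ s : ℝ, s ≤ 0 → ∀ x : Fin n → ℝ,
        normP P (dilMat Gd s *ᵥ x) ≤ Real.exp (β * s) * normP P x)) ↔
    (P.PosDef ∧ (P * Gd + Gdᵀ * P).PosDef) := by
  have hPh : P.IsHermitian := isHermitian_iff_isSymm.2 hP
  have hQh : (P * Gd + Gdᵀ * P).IsHermitian := by
    simp [IsSymm, transpose_add, transpose_mul, hP.eq, add_comm]
  simp only [posDef_iff_dotProduct_mulVec, hPh, hQh, true_and, star_trivial]
  constructor
  · rintro ⟨hdil, β, hβ, hmono⟩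
    have hPpos : ∀ ⦃x : Fin n → ℝ⦄, x ≠ 0 → 0 < x ⬝ᵥ (P *ᵥ x) := fun x hx =>
      dotProduct_mulVec_pos_of_dilQuad
        (fun y hy => ((hdil y hy).1.eventually_gt_atTop 0).exists.imp fun _ => Real.sqrt_pos.1)
        (fun _ _ _ => dilQuad_nonpos_of_le hmono) hx
    have hQ := (monotone_exp_mul_dilQuad_iff Gd P (2 * β)).1
      (monotone_exp_mul_dilQuad_of_normP_le
        (fun y => (eq_or_ne y 0).elim (fun hy => by simp [hy]) fun hy => (hPpos hy).le) hmono)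
    exact ⟨hPpos, fun x hx => (mul_pos (mul_pos two_pos hβ) (hPpos hx)).trans_le (hQ x)⟩
  · rintro ⟨hPpos, hQpos⟩
    obtain ⟨c, hc, hcQ⟩ := exists_pos_mul_dotProduct_mulVec_le P hQpos
    have hf := (monotone_exp_mul_dilQuad_iff Gd P (2 * (c / 2))).2
      (by rwa [mul_div_cancel₀ c two_ne_zero])
    refine ⟨fun x hx => ⟨tendsto_normP_dilMat_mulVec_atTop (half_pos hc) (hf x) (hPpos hx),
      tendsto_normP_dilMat_mulVec_atBot (half_pos hc) (hf x)⟩,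
      c / 2, half_pos hc, fun s hs x => ?_⟩
    simpa [dilMat_zero] using normP_dilMat_mulVec_le_of_monotone (hf x) hs
end

section
/- Let A ∈ ℝ^{n×n}, B ∈ ℝ^{n×m}, G₀ ∈ ℝ^{n×n}, Y₀ ∈ ℝ^{m×n} satisfy A·G₀ + B·Y₀ = G₀·A + A and G₀·B = 0, and assume G₀ − I_n is invertible. Let K₀ = Y₀·(G₀ − I_n)^{−1}, μ ∈ ℝ, G_d = I_n + μ·G₀, and A₀ = A + B·K₀. Then: (i) A₀·G_d = (G_d + μ·I_n)·A₀; (ii) A₀·exp(s·G_d) = e^{μs}·exp(s·G_d)·A₀ for all s ∈ ℝ (i.e., the linear vector field x ↦ A₀x is d-homogeneous of degree μ for d(s) = exp(s·G_d)); and (iii) exp(s·G_d)·B = e^{s}·B for all s ∈ ℝ. -/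
/-!
Since `K₀ (G₀ - I) = Y₀`, the hypothesis on `A G₀ + B Y₀` turns into `A₀ G₀ = (G₀ + I) A₀`, and
`G₀ B = 0` gives `G_d B = B`. Both are intertwining relations `x a = a y`, which pass to the
exponential series termwise: `exp x · a = a · exp y`. Since `μ I` is central,
`exp (s G_d + μ s I) = e^{μ s} exp (s G_d)`, which gives (ii), and `exp (s I) = e^s I` gives (iii).
-/

open Matrix NormedSpace

namespace Matrix

section Exponential

variable {l m 𝕂 : Type*} [Fintype l] [DecidableEq l] [Fintype m] [DecidableEq m] [RCLike 𝕂]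

theorem exp_series_hasSum_exp (x : Matrix l l 𝕂) :
    HasSum (fun k => (k.factorial⁻¹ : 𝕂) • x ^ k) (exp x) :=
  open scoped Norms.Operator in exp_series_hasSum_exp' x

theorem pow_mul_eq_mul_pow_of_mul_eq {x : Matrix l l 𝕂} {y : Matrix m m 𝕂} {a : Matrix l m 𝕂}
    (h : x * a = a * y) (k : ℕ) : x ^ k * a = a * y ^ k := by
  induction k with
  | zero => simp
  | succ k ih =>
    rw [pow_succ', Matrix.mul_assoc, ih, ← Matrix.mul_assoc, h, Matrix.mul_assoc, ← pow_succ']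

theorem exp_mul_eq_mul_exp_of_mul_eq {x : Matrix l l 𝕂} {y : Matrix m m 𝕂} {a : Matrix l m 𝕂}
    (h : x * a = a * y) : exp x * a = a * exp y := by
  have hx : HasSum (fun k => (k.factorial⁻¹ : 𝕂) • (x ^ k * a)) (exp x * a) := by
    simpa only [Function.comp_def, addMonoidHomMulRight_apply, Matrix.smul_mul] using
      (exp_series_hasSum_exp x).map (addMonoidHomMulRight a)
        (continuous_id.matrix_mul continuous_const)
  have hy : HasSum (fun k => (k.factorial⁻¹ : 𝕂) • (a * y ^ k)) (a * exp y) := by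
    simpa only [Function.comp_def, addMonoidHomMulLeft_apply, Matrix.mul_smul] using
      (exp_series_hasSum_exp y).map (addMonoidHomMulLeft a)
        (continuous_const.matrix_mul continuous_id)
  simp only [pow_mul_eq_mul_pow_of_mul_eq h] at hx
  exact hx.unique hy

theorem exp_smul_one (c : 𝕂) : exp (c • (1 : Matrix l l 𝕂)) = exp c • 1 := by
  rw [← Algebra.algebraMap_eq_smul_one, ← Algebra.algebraMap_eq_smul_one]
  open scoped Norms.Operator in exact (algebraMap_exp_comm c).symm

theorem exp_add_smul_one (x : Matrix l l 𝕂) (c : 𝕂) : exp (x + c • 1) = exp c • exp x := by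
  rw [exp_add_of_commute _ _ ((Commute.one_right x).smul_right c), exp_smul_one, Matrix.mul_smul,
    Matrix.mul_one]

theorem mul_exp_smul_of_mul_eq {a g : Matrix l l 𝕂} {μ : 𝕂} (h : a * g = (g + μ • 1) * a)
    (s : 𝕂) : a * exp (s • g) = exp (μ * s) • (exp (s • g) * a) := by
  have hs : (s • g + (μ * s) • 1) * a = a * (s • g) := by
    rw [Matrix.mul_smul, h, mul_comm, ← smul_smul, ← smul_add, Matrix.smul_mul]
  rw [← exp_mul_eq_mul_exp_of_mul_eq hs, exp_add_smul_one, Matrix.smul_mul]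

theorem exp_smul_mul_of_mul_eq_self {g : Matrix l l 𝕂} {b : Matrix l m 𝕂} (h : g * b = b)
    (s : 𝕂) : exp (s • g) * b = exp s • b := by
  have hs : (s • g) * b = b * (s • (1 : Matrix m m 𝕂)) := by
    rw [Matrix.smul_mul, h, Matrix.mul_smul, Matrix.mul_one]
  rw [exp_mul_eq_mul_exp_of_mul_eq hs, exp_smul_one, Matrix.mul_smul, Matrix.mul_one]

end Exponential

theorem feedback_mul_eq_add_one_mul {n m R : Type*} [Fintype n] [Fintype m] [DecidableEq n]
    [Ring R] {A G : Matrix n n R} {B : Matrix n m R} {Y K : Matrix m n R}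
    (hAG : A * G + B * Y = G * A + A) (hGB : G * B = 0) (hK : K * (G - 1) = Y) :
    (A + B * K) * G = (G + 1) * (A + B * K) := by
  have hKG : K * G = Y + K := by
    rwa [Matrix.mul_sub, Matrix.mul_one, sub_eq_iff_eq_add] at hK
  calc (A + B * K) * G = A * G + B * Y + B * K := by
        rw [Matrix.add_mul, Matrix.mul_assoc, hKG, Matrix.mul_add, add_assoc]
    _ = G * A + A + B * K := by rw [hAG]
    _ = (G + 1) * (A + B * K) := by
        rw [Matrix.add_mul, Matrix.mul_add, ← Matrix.mul_assoc, hGB, Matrix.zero_mul,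
          Matrix.one_mul]
        abel

end Matrix

/-- homogenization of a linear plant: if `A G₀ + B Y₀ = G₀ A + A`,
`G₀ B = 0`, `K₀ = Y₀ (G₀ − I)⁻¹`, `G_d = I + μ G₀` and `A₀ = A + B K₀`, then
`A₀ G_d = (G_d + μ I) A₀`, the field `x ↦ A₀ x` is `d`-homogeneous of degree `μ`
(`A₀ e^{sG_d} = e^{μs} e^{sG_d} A₀`), and `e^{sG_d} B = e^{s} B`. -/
theorem stmt15 {n m : ℕ} (A G₀ : Matrix (Fin n) (Fin n) ℝ)
    (B : Matrix (Fin n) (Fin m) ℝ) (Y₀ : Matrix (Fin m) (Fin n) ℝ)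
    (hG0Y0 : A * G₀ + B * Y₀ = G₀ * A + A) (hG0B : G₀ * B = 0)
    (hinv : IsUnit (G₀ - 1)) (μ : ℝ)
    (K₀ : Matrix (Fin m) (Fin n) ℝ) (hK₀ : K₀ = Y₀ * (G₀ - 1)⁻¹)
    (Gd : Matrix (Fin n) (Fin n) ℝ) (hGd : Gd = 1 + μ • G₀)
    (A₀ : Matrix (Fin n) (Fin n) ℝ) (hA₀ : A₀ = A + B * K₀) :
    A₀ * Gd = (Gd + μ • (1 : Matrix (Fin n) (Fin n) ℝ)) * A₀ ∧
    (∀ s : ℝ, A₀ * NormedSpace.exp (s • Gd) =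
      Real.exp (μ * s) • (NormedSpace.exp (s • Gd) * A₀)) ∧
    (∀ s : ℝ, NormedSpace.exp (s • Gd) * B = Real.exp s • B) := by
  subst hGd
  have hK₀G₀ : K₀ * (G₀ - 1) = Y₀ := by
    rw [hK₀, Matrix.mul_assoc, nonsing_inv_mul _ ((isUnit_iff_isUnit_det _).mp hinv),
      Matrix.mul_one]
  have hA₀G₀ : A₀ * G₀ = (G₀ + 1) * A₀ := hA₀ ▸ feedback_mul_eq_add_one_mul hG0Y0 hG0B hK₀G₀
  have hA₀Gd : A₀ * (1 + μ • G₀) = (1 + μ • G₀ + μ • 1) * A₀ := by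
    rw [Matrix.mul_add, Matrix.mul_smul, hA₀G₀, Matrix.add_mul, Matrix.add_mul, Matrix.add_mul,
      Matrix.smul_mul, Matrix.smul_mul, smul_add, Matrix.mul_one, Matrix.one_mul]
    abel
  have hGdB : (1 + μ • G₀) * B = B := by
    rw [Matrix.add_mul, Matrix.one_mul, Matrix.smul_mul, hG0B, smul_zero, add_zero]
  rw [Real.exp_eq_exp_ℝ]
  exact ⟨hA₀Gd, mul_exp_smul_of_mul_eq hA₀Gd, exp_smul_mul_of_mul_eq_self hGdB⟩
end
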